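/- Let k ≥ 3 be odd and let G be a connected k-regular simple graph on vertex set {1,...,n−1}. Suppose f_1,...,f_{(k−1)/2} are pairwise vertex-disjoint edges of G lying on a common path. Then the graph obtained by deleting these edges and joining a new vertex n to all k−1 endpoints of these edges is a connected graph on n vertices in which the vertex n has degree k−1 and every other vertex has degree k. -/

import Mathlib

/-!
A vertex of `G` lying on an edge `xy` of `s` loses the neighbour `y` and gains the new vertex;
since the edges of `s` are disjoint this happens at most once, so every old vertex keeps its
degree, while the new vertex sees the `2 |s| = k - 1` endpoints of `s`. Each deleted edge `ab` is
replaced by the path `a, new, b`, so walks of `G` survive, and as `s ≠ ∅` (because `k ≥ 3`) the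
new vertex is joined to the rest.
-/

/-- The graph on `Fin (n+1)` obtained from `G` on `Fin n` by deleting the edges in `s`
and joining the new vertex `Fin.last n` to every endpoint of an edge of `s`. -/
def extendByOne (n : ℕ) (G : SimpleGraph (Fin n)) (s : Finset (Sym2 (Fin n))) :
    SimpleGraph (Fin (n + 1)) :=
  SimpleGraph.fromRel (fun x y =>
    (∃ x' y' : Fin n, x = x'.castSucc ∧ y = y'.castSucc ∧ G.Adj x' y' ∧ s(x', y') ∉ s)
    ∨ (x = Fin.last n ∧ ∃ y' : Fin n, y = y'.castSucc ∧ ∃ e ∈ s, y' ∈ e))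

open Finset in
theorem Sym2.card_biUnion_toFinset {α : Type*} [DecidableEq α] {s : Finset (Sym2 α)}
    (hdiag : ∀ e ∈ s, ¬e.IsDiag)
    (hdisj : ∀ e ∈ s, ∀ f ∈ s, e ≠ f → ∀ x : α, x ∈ e → x ∉ f) :
    #(s.biUnion Sym2.toFinset) = 2 * #s := by
  rw [card_biUnion, sum_congr rfl fun e he => Sym2.card_toFinset_of_not_isDiag e (hdiag e he),
    sum_const, smul_eq_mul, mul_comm]
  intro e he f hf hef
  exact disjoint_left.mpr fun x hxe hxf =>
    hdisj e he f hf hef x (Sym2.mem_toFinset.mp hxe) (Sym2.mem_toFinset.mp hxf)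

section
variable {n : ℕ} {G : SimpleGraph (Fin n)} {s : Finset (Sym2 (Fin n))}

theorem extendByOne_adj_castSucc_castSucc {x y : Fin n} :
    (extendByOne n G s).Adj x.castSucc y.castSucc ↔ G.Adj x y ∧ s(x, y) ∉ s := by
  simp only [extendByOne, SimpleGraph.fromRel_adj, Fin.castSucc_inj, Fin.castSucc_ne_last,
    false_and, or_false, exists_and_left, exists_eq_left', ne_eq]
  rw [G.adj_comm y x, Sym2.eq_swap, or_self]
  exact and_iff_right_of_imp fun h => h.1.ne

theorem extendByOne_adj_last_castSucc {y : Fin n} :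
    (extendByOne n G s).Adj (Fin.last n) y.castSucc ↔ ∃ e ∈ s, y ∈ e := by
  simp [extendByOne, SimpleGraph.fromRel_adj, Fin.castSucc_ne_last, (Fin.castSucc_ne_last _).symm]

theorem extendByOne_neighborSet_last :
    (extendByOne n G s).neighborSet (Fin.last n) = Fin.castSucc '' ↑(s.biUnion Sym2.toFinset) := by
  ext v
  induction v using Fin.lastCases with
  | last => simp [Fin.castSucc_ne_last]
  | cast y => simp [extendByOne_adj_last_castSucc, Sym2.mem_toFinset]

theorem extendByOne_neighborSet_castSucc_of_notMem {x : Fin n} (hx : ∀ e ∈ s, x ∉ e) :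
    (extendByOne n G s).neighborSet x.castSucc = Fin.castSucc '' G.neighborSet x := by
  ext v
  induction v using Fin.lastCases with
  | last =>
    simp only [SimpleGraph.mem_neighborSet, Set.mem_image, Fin.castSucc_ne_last, and_false,
      exists_false, iff_false]
    intro h
    obtain ⟨e, he, hxe⟩ := extendByOne_adj_last_castSucc.mp h.symm
    exact hx e he hxe
  | cast y =>
    simp only [SimpleGraph.mem_neighborSet, extendByOne_adj_castSucc_castSucc,
      Fin.castSucc_injective n |>.mem_set_image]
    exact and_iff_left fun h => hx _ h (Sym2.mem_mk_left x y)

theorem extendByOne_neighborSet_castSucc_of_mem {x y₀ : Fin n} (h₀ : s(x, y₀) ∈ s)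
    (hdisj : ∀ e ∈ s, ∀ f ∈ s, e ≠ f → ∀ x : Fin n, x ∈ e → x ∉ f) :
    (extendByOne n G s).neighborSet x.castSucc =
      insert (Fin.last n) (Fin.castSucc '' (G.neighborSet x \ {y₀})) := by
  ext v
  induction v using Fin.lastCases with
  | last =>
    simp only [SimpleGraph.mem_neighborSet, Set.mem_insert_iff, true_or, iff_true]
    exact (extendByOne_adj_last_castSucc.mpr ⟨_, h₀, Sym2.mem_mk_left x y₀⟩).symm
  | cast y =>
    simp only [SimpleGraph.mem_neighborSet, extendByOne_adj_castSucc_castSucc,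
      Set.mem_insert_iff, Fin.castSucc_ne_last, false_or,
      Fin.castSucc_injective n |>.mem_set_image, Set.mem_sdiff, Set.mem_singleton_iff]
    refine and_congr_right fun hadj => ⟨fun h hy => h (hy ▸ h₀), fun hy h => ?_⟩
    have : s(x, y₀) = s(x, y) := by_contra fun hne =>
      hdisj _ h₀ _ h hne x (Sym2.mem_mk_left x y₀) (Sym2.mem_mk_left x y)
    rcases Sym2.eq_iff.mp this with ⟨-, rfl⟩ | ⟨rfl, -⟩
    · exact hy rfl
    · exact hadj.ne rfl

theorem extendByOne_ncard_neighborSet_last (hsub : ∀ e ∈ s, e ∈ G.edgeSet)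
    (hdisj : ∀ e ∈ s, ∀ f ∈ s, e ≠ f → ∀ x : Fin n, x ∈ e → x ∉ f) :
    ((extendByOne n G s).neighborSet (Fin.last n)).ncard = 2 * s.card := by
  rw [extendByOne_neighborSet_last, Set.ncard_image_of_injective _ (Fin.castSucc_injective n),
    Set.ncard_coe_finset, Sym2.card_biUnion_toFinset
      (fun e he => G.not_isDiag_of_mem_edgeSet (hsub e he)) hdisj]

theorem extendByOne_ncard_neighborSet_castSucc (hsub : ∀ e ∈ s, e ∈ G.edgeSet)
    (hdisj : ∀ e ∈ s, ∀ f ∈ s, e ≠ f → ∀ x : Fin n, x ∈ e → x ∉ f) (x : Fin n) :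
    ((extendByOne n G s).neighborSet x.castSucc).ncard = (G.neighborSet x).ncard := by
  by_cases hx : ∃ e ∈ s, x ∈ e
  · obtain ⟨e, he, hxe⟩ := hx
    rw [← Sym2.other_spec hxe] at he
    have hadj : Sym2.Mem.other hxe ∈ G.neighborSet x := hsub _ he
    rw [extendByOne_neighborSet_castSucc_of_mem he hdisj,
      Set.ncard_insert_of_notMem (by simp [Fin.castSucc_ne_last]),
      Set.ncard_image_of_injective _ (Fin.castSucc_injective n),
      Set.ncard_sdiff_singleton_add_one hadj]
  · simp only [not_exists, not_and] at hx
    rw [extendByOne_neighborSet_castSucc_of_notMem hx,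
      Set.ncard_image_of_injective _ (Fin.castSucc_injective n)]

theorem extendByOne_reachable_castSucc {x y : Fin n} (h : G.Reachable x y) :
    (extendByOne n G s).Reachable x.castSucc y.castSucc := by
  rw [SimpleGraph.reachable_iff_reflTransGen] at h ⊢
  refine Relation.ReflTransGen.lift' Fin.castSucc (fun a b hab => ?_) x y h
  rw [Function.onFun, ← SimpleGraph.reachable_iff_reflTransGen]
  by_cases hm : s(a, b) ∈ s
  · -- a deleted edge is bypassed through the new vertex
    exact (extendByOne_adj_last_castSucc.mpr ⟨_, hm, Sym2.mem_mk_left a b⟩).symm.reachable.trans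
      (extendByOne_adj_last_castSucc.mpr ⟨_, hm, Sym2.mem_mk_right a b⟩).reachable
  · exact (extendByOne_adj_castSucc_castSucc.mpr ⟨hab, hm⟩).reachable

theorem extendByOne_connected (hc : G.Connected) (hs : s.Nonempty) :
    (extendByOne n G s).Connected := by
  obtain ⟨e, he⟩ := hs
  obtain ⟨a, hae⟩ : ∃ a, a ∈ e := ⟨_, e.out_fst_mem⟩
  have hlast : (extendByOne n G s).Adj (Fin.last n) a.castSucc :=
    extendByOne_adj_last_castSucc.mpr ⟨e, he, hae⟩
  refine (SimpleGraph.connected_iff_exists_forall_reachable _).mpr ⟨Fin.last n, fun v => ?_⟩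
  induction v using Fin.lastCases with
  | last => rfl
  | cast x => exact hlast.reachable.trans (extendByOne_reachable_castSucc (hc.preconnected a x))
end

theorem extendByOne_connected_nearly_regular_general (n k : ℕ) (hk : Odd k) (hk3 : 3 ≤ k)
    (G : SimpleGraph (Fin n)) (hc : G.Connected)
    (hreg : ∀ v, (G.neighborSet v).ncard = k)
    (s : Finset (Sym2 (Fin n))) (hcard : s.card = (k - 1) / 2)
    (hsub : ∀ e ∈ s, e ∈ G.edgeSet)
    (hdisj : ∀ e ∈ s, ∀ f ∈ s, e ≠ f → ∀ x : Fin n, x ∈ e → x ∉ f) :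
    (extendByOne n G s).Connected ∧
      ((extendByOne n G s).neighborSet (Fin.last n)).ncard = k - 1 ∧
      ∀ v : Fin (n + 1), v ≠ Fin.last n →
        ((extendByOne n G s).neighborSet v).ncard = k := by
  have hs : s.Nonempty := by
    rw [← Finset.card_pos, hcard]
    omega
  refine ⟨extendByOne_connected hc hs, ?_, fun v hv => ?_⟩
  · rw [extendByOne_ncard_neighborSet_last hsub hdisj, hcard]
    obtain ⟨m, rfl⟩ := hk
    omega
  · obtain ⟨x, rfl⟩ := Fin.exists_castSucc_eq.mpr hv
    rw [extendByOne_ncard_neighborSet_castSucc hsub hdisj, hreg]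

theorem extendByOne_connected_nearly_regular (n k : ℕ) (hk : Odd k) (hk3 : 3 ≤ k)
    (G : SimpleGraph (Fin n)) (hc : G.Connected)
    (hreg : ∀ v, (G.neighborSet v).ncard = k)
    (s : Finset (Sym2 (Fin n))) (hcard : s.card = (k - 1) / 2)
    (hsub : ∀ e ∈ s, e ∈ G.edgeSet)
    (hdisj : ∀ e ∈ s, ∀ f ∈ s, e ≠ f → ∀ x : Fin n, x ∈ e → x ∉ f)
    (hpath : ∃ (u v : Fin n) (p : G.Walk u v), p.IsPath ∧ ∀ e ∈ s, e ∈ p.edges) :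
    (extendByOne n G s).Connected ∧
      ((extendByOne n G s).neighborSet (Fin.last n)).ncard = k - 1 ∧
      ∀ v : Fin (n + 1), v ≠ Fin.last n →
        ((extendByOne n G s).neighborSet v).ncard = k :=
  extendByOne_connected_nearly_regular_general n k hk hk3 G hc hreg s hcard hsub hdisj
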